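/- Let C be a Z2Z4-additive code and Φ the extended Gray map. Then Φ(C) is a linear binary code if and only if 2u*v ∈ C⊥ for all u ∈ C and v ∈ C⊥. -/
import Mathlib


open Finset

/-- The ambient mixed alphabet space `Z2^α × Z4^β`. -/
abbrev Amb (α β : ℕ) := (Fin α → ZMod 2) × (Fin β → ZMod 4)

/-- The binary space `Z2^{α+2β}`, represented as `Z2^α × Z2^β × Z2^β`
(binary part, first Gray bits, second Gray bits). -/
abbrev Bin (α β : ℕ) := (Fin α → ZMod 2) × (Fin β → ZMod 2) × (Fin β → ZMod 2)

/-- The `Z4`-valued inner product `[u,v] = 2·Σ u_i v_i + Σ u'_j v'_j`. -/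
def zinner {α β : ℕ} (u v : Amb α β) : ZMod 4 :=
  2 * ∑ i, ((u.1 i).val : ZMod 4) * ((v.1 i).val : ZMod 4) + ∑ j, u.2 j * v.2 j

/-- The dual of a subset of the mixed ambient space. -/
def zdual {α β : ℕ} (C : Set (Amb α β)) : Set (Amb α β) :=
  {v | ∀ u ∈ C, zinner u v = 0}

/-- The vector `2u*v = (0 | 2u'*v')` (componentwise product; doubling kills the binary part). -/
def star2 {α β : ℕ} (u v : Amb α β) : Amb α β :=
  (0, fun j => 2 * u.2 j * v.2 j)

/-- The usual Gray map `Z4 → Z2²`. -/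
def gray (x : ZMod 4) : ZMod 2 × ZMod 2 :=
  match x.val with
  | 0 => (0, 0)
  | 1 => (0, 1)
  | 2 => (1, 1)
  | _ => (1, 0)

/-- The extended Gray map `Φ : Z2^α × Z4^β → Z2^{α+2β}`. -/
def Phi {α β : ℕ} (u : Amb α β) : Bin α β :=
  (u.1, fun j => (gray (u.2 j)).1, fun j => (gray (u.2 j)).2)

/-- The standard binary inner product on `Z2^{α+2β}`. -/
def binner {α β : ℕ} (x y : Bin α β) : ZMod 2 :=
  ∑ i, x.1 i * y.1 i + ∑ j, x.2.1 j * y.2.1 j + ∑ j, x.2.2 j * y.2.2 j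

/-- The dual of a subset of `Z2^{α+2β}`. -/
def bdual {α β : ℕ} (S : Set (Bin α β)) : Set (Bin α β) :=
  {y | ∀ x ∈ S, binner x y = 0}

/-- A subset of `Z2^{α+2β}` is a linear binary code if it is a linear subspace. -/
def IsLinear {α β : ℕ} (S : Set (Bin α β)) : Prop :=
  ∃ M : Submodule (ZMod 2) (Bin α β), ↑M = S

/-- The set `D_C = {2u*v : u ∈ C, v ∈ C⊥}`. -/
def DC {α β : ℕ} (C : Set (Amb α β)) : Set (Amb α β) :=
  {x | ∃ u ∈ C, ∃ v ∈ zdual C, x = star2 u v}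

/-- The standard binary inner product on `Z2^n`. -/
def binner2 {n : ℕ} (u v : Fin n → ZMod 2) : ZMod 2 := ∑ i, u i * v i

/-- The dual of a subset of `Z2^n`. -/
def bdual2 {n : ℕ} (C : Set (Fin n → ZMod 2)) : Set (Fin n → ZMod 2) :=
  {v | ∀ u ∈ C, binner2 u v = 0}


namespace Stmt8Aux

variable {α β : ℕ}

lemma gray_add (x y : ZMod 4) : gray (x + y) = gray x + gray y + gray (2 * x * y) := by revert x y; decide

lemma gray_injective : Function.Injective gray := by decide

lemma gray_zero : gray 0 = 0 := by decide

lemma Phi_add {α β : ℕ} (u v : Amb α β) :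
    Phi (u + v) = Phi u + Phi v + Phi (star2 u v) := by
  refine Prod.ext ?_ (Prod.ext ?_ ?_)
  · simp [Phi, star2]
  · funext j
    have := congrArg Prod.fst (gray_add (u.2 j) (v.2 j))
    simpa [Phi, star2] using this
  · funext j
    have := congrArg Prod.snd (gray_add (u.2 j) (v.2 j))
    simpa [Phi, star2] using this

lemma Phi_zero {α β : ℕ} : Phi (0 : Amb α β) = 0 := by
  refine Prod.ext ?_ (Prod.ext ?_ ?_) <;> funext j <;> simp [Phi, gray_zero]

lemma Phi_inj {α β : ℕ} : Function.Injective (Phi (α := α) (β := β)) := by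
  intro u v h
  have h1 := congrArg Prod.fst h
  have h2 := congrArg (fun x : Bin α β => x.2.1) h
  have h3 := congrArg (fun x : Bin α β => x.2.2) h
  refine Prod.ext h1 (funext fun j => gray_injective ?_)
  exact Prod.ext (congrFun h2 j) (congrFun h3 j)

lemma star2_star2 {α β : ℕ} (a u v : Amb α β) : star2 a (star2 u v) = 0 := by
  have key : ∀ x y z : ZMod 4, 2 * x * (2 * y * z) = 0 := by decide
  refine Prod.ext rfl ?_
  funext j
  exact key _ _ _

lemma bin_add_self {α β : ℕ} (x : Bin α β) : x + x = 0 := by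
  have key : ∀ a : ZMod 2, a + a = 0 := by decide
  refine Prod.ext ?_ (Prod.ext ?_ ?_) <;> funext j <;> exact key _

lemma bin_neg {α β : ℕ} (x : Bin α β) : -x = x := by
  have key : ∀ a : ZMod 2, -a = a := by decide
  refine Prod.ext ?_ (Prod.ext ?_ ?_) <;> funext j <;> exact key _

lemma isLinear_iff {α β : ℕ} (C : AddSubgroup (Amb α β)) :
    IsLinear (Phi '' (C : Set (Amb α β))) ↔ ∀ u ∈ C, ∀ v ∈ C, star2 u v ∈ C := by
  constructor
  · rintro ⟨M, hM⟩ u hu v hv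
    have hu' : Phi u ∈ M := by rw [← SetLike.mem_coe, hM]; exact ⟨u, hu, rfl⟩
    have hv' : Phi v ∈ M := by rw [← SetLike.mem_coe, hM]; exact ⟨v, hv, rfl⟩
    have huv : Phi (u + v) ∈ M := by
      rw [← SetLike.mem_coe, hM]; exact ⟨u + v, C.add_mem hu hv, rfl⟩
    have hstar : Phi (star2 u v) ∈ M := by
      have : Phi (star2 u v) = Phi (u + v) - (Phi u + Phi v) := by
        rw [Phi_add u v]; abel
      rw [this]
      exact M.sub_mem huv (M.add_mem hu' hv')
    rw [← SetLike.mem_coe, hM] at hstar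
    obtain ⟨w, hw, hwe⟩ := hstar
    rwa [← Phi_inj hwe]
  · intro h
    refine ⟨AddSubgroup.toZModSubmodule 2
      { carrier := Phi '' (C : Set (Amb α β))
        add_mem' := ?_
        zero_mem' := ⟨0, C.zero_mem, Phi_zero⟩
        neg_mem' := ?_ }, rfl⟩
    · rintro x y ⟨u, hu, rfl⟩ ⟨v, hv, rfl⟩
      refine ⟨u + v + star2 u v, C.add_mem (C.add_mem hu hv) (h u hu v hv), ?_⟩
      rw [Phi_add (u + v) (star2 u v), star2_star2, Phi_zero, add_zero, Phi_add u v]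
      have := bin_add_self (Phi (star2 u v))
      calc Phi u + Phi v + Phi (star2 u v) + Phi (star2 u v)
          = Phi u + Phi v + (Phi (star2 u v) + Phi (star2 u v)) := by abel
        _ = Phi u + Phi v := by rw [this, add_zero]
    · rintro x ⟨u, hu, rfl⟩
      exact ⟨u, hu, (bin_neg _).symm⟩

lemma zinner_comm {α β : ℕ} (u v : Amb α β) : zinner u v = zinner v u := by
  unfold zinner
  congr 1
  · congr 1
    exact Finset.sum_congr rfl fun i _ => mul_comm _ _
  · exact Finset.sum_congr rfl fun j _ => mul_comm _ _

lemma zinner_star2_swap {α β : ℕ} (u w v : Amb α β) :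
    zinner (star2 u w) v = zinner (star2 u v) w := by
  unfold zinner star2
  simp only [Prod.fst, Prod.snd]
  have h0 : ∀ i : Fin α, (((0 : Fin α → ZMod 2) i).val : ZMod 4)
      * ((v.1 i).val : ZMod 4) = 0 := by intro i; simp
  have h0' : ∀ i : Fin α, (((0 : Fin α → ZMod 2) i).val : ZMod 4)
      * ((w.1 i).val : ZMod 4) = 0 := by intro i; simp
  rw [Finset.sum_congr rfl fun i _ => h0 i, Finset.sum_congr rfl fun i _ => h0' i]
  congr 1
  exact Finset.sum_congr rfl fun j _ => by ring

def ei (i : Fin α) : Amb α β := (Pi.single i 1, 0)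
def fj (j : Fin β) : Amb α β := (0, Pi.single j 1)

lemma decomp (u : Amb α β) :
    u = ∑ i, (u.1 i).val • ei i + ∑ j, (u.2 j).val • fj j := by
  have k2 : ∀ a : ZMod 2, a.val • (1 : ZMod 2) = a := by decide
  have k4 : ∀ a : ZMod 4, a.val • (1 : ZMod 4) = a := by decide
  refine Prod.ext ?_ ?_
  · have : (∑ i, (u.1 i).val • (ei i : Amb α β) + ∑ j, (u.2 j).val • fj j).1
        = ∑ i, (u.1 i).val • (Pi.single i 1 : Fin α → ZMod 2) := by
      simp [ei, fj, Prod.fst_sum]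
    rw [this]
    funext k
    simp only [Finset.sum_apply, Pi.smul_apply, Pi.single_apply, smul_ite, smul_zero,
      Finset.sum_ite_eq, Finset.sum_ite_eq', Finset.mem_univ, if_true]
    exact (k2 _).symm
  · have : (∑ i, (u.1 i).val • (ei i : Amb α β) + ∑ j, (u.2 j).val • fj j).2
        = ∑ j, (u.2 j).val • (Pi.single j 1 : Fin β → ZMod 4) := by
      simp [ei, fj, Prod.snd_sum]
    rw [this]
    funext k
    simp only [Finset.sum_apply, Pi.smul_apply, Pi.single_apply, smul_ite, smul_zero,
      Finset.sum_ite_eq, Finset.sum_ite_eq', Finset.mem_univ, if_true]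
    exact (k4 _).symm

lemma two_smul_ei (i : Fin α) : (2 : ℕ) • (ei i : Amb α β) = 0 := by
  refine Prod.ext ?_ ?_
  · funext k
    have : ∀ a : ZMod 2, a + a = 0 := by decide
    simp [ei, two_smul, this]
  · simp [ei]

lemma exists_rep (ψ : Amb α β →+ ZMod 4) : ∃ v : Amb α β, ∀ u, zinner u v = ψ u := by
  classical
  refine ⟨(fun i => if ψ (ei i) = 0 then 0 else 1, fun j => ψ (fj j)), fun u => ?_⟩
  have hψ2 : ∀ i, 2 * ψ (ei i) = 0 := by
    intro i
    have : ψ ((2 : ℕ) • (ei i : Amb α β)) = 0 := by rw [two_smul_ei]; exact map_zero ψ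
    rwa [map_nsmul, nsmul_eq_mul, Nat.cast_ofNat] at this
  conv_rhs => rw [decomp u]
  rw [map_add, map_sum, map_sum]
  simp_rw [map_nsmul]
  unfold zinner
  simp only
  rw [Finset.mul_sum]
  congr 1
  · refine Finset.sum_congr rfl fun i _ => ?_
    have h2 := hψ2 i
    have ha : ∀ a : ZMod 2, a = 0 ∨ a = 1 := by decide
    rcases ha (u.1 i) with h | h <;> rw [h]
    · simp
    · rw [ZMod.val_one]
      by_cases hc0 : ψ (ei i) = 0
      · simp [hc0]
      · rw [if_neg hc0, ZMod.val_one]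
        have key : ∀ c : ZMod 4, 2 * c = 0 → c ≠ 0 →
            2 * ((1 : ℕ) : ZMod 4) * ((1 : ℕ) : ZMod 4) = (1 : ℕ) • c := by decide
        exact key _ h2 hc0
  · refine Finset.sum_congr rfl fun j _ => ?_
    rw [nsmul_eq_mul, ZMod.natCast_val, ZMod.cast_id]

lemma amb_four (a : Amb α β) : a + a + (a + a) = 0 := by
  have k2 : ∀ x : ZMod 2, x + x + (x + x) = 0 := by decide
  have k4 : ∀ x : ZMod 4, x + x + (x + x) = 0 := by decide
  refine Prod.ext (funext fun i => k2 _) (funext fun j => k4 _)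

lemma sep (C : AddSubgroup (Amb α β)) {x : Amb α β} (hx : x ∉ C) :
    ∃ ψ : Amb α β →+ ZMod 4, (∀ c ∈ C, ψ c = 0) ∧ ψ x ≠ 0 := by
  classical
  let H := Amb α β ⧸ C
  have hq : ∀ h : H, h + h + (h + h) = 0 := by
    intro h
    induction h using QuotientAddGroup.induction_on with
    | H a =>
      show ((a + a + (a + a) : Amb α β) : H) = 0
      rw [amb_four]; rfl
  have hpow4 : ∀ g : Multiplicative H, g ^ 4 = 1 := by
    intro g
    show g ^ 4 = 1
    have h4 : g ^ 4 = g * g * (g * g) := by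
      rw [pow_succ, pow_succ, pow_succ, pow_one, mul_assoc]
    rw [h4]
    exact hq g.toAdd
  -- exponent instance
  haveI : NeZero ((Monoid.exponent (Multiplicative H) : ℂ)) := by
    refine ⟨?_⟩
    rw [Nat.cast_ne_zero]
    exact Monoid.exponent_ne_zero_of_finite
  have hx' : Multiplicative.ofAdd ((x : Amb α β) : H) ≠ 1 := by
    simp only [ne_eq, ofAdd_eq_one]
    rw [show ((x : Amb α β) : H) = QuotientAddGroup.mk' C x from rfl]
    intro h0
    exact hx ((QuotientAddGroup.eq_zero_iff x).mp h0)
  obtain ⟨φ, hφ⟩ := CommGroup.exists_apply_ne_one_of_hasEnoughRootsOfUnity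
    (G := Multiplicative H) (M := ℂ) hx'
  -- corestrict to roots of unity
  have hmem : ∀ g : Multiplicative H, φ g ∈ rootsOfUnity 4 ℂ := by
    intro g
    rw [mem_rootsOfUnity]
    rw [← map_pow, hpow4, map_one]
  let φ' : Multiplicative H →* rootsOfUnity 4 ℂ := φ.codRestrict _ hmem
  -- iso rootsOfUnity 4 ℂ ≃* Multiplicative (ZMod 4)
  haveI : NeZero ((4 : ℕ) : ℂ) := ⟨by norm_num⟩
  haveI : HasEnoughRootsOfUnity ℂ 4 := inferInstance
  haveI : IsCyclic (rootsOfUnity 4 ℂ) := HasEnoughRootsOfUnity.rootsOfUnity_isCyclic ℂ 4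
  have hcard : Nat.card (rootsOfUnity 4 ℂ) = Nat.card (Multiplicative (ZMod 4)) := by
    rw [HasEnoughRootsOfUnity.natCard_rootsOfUnity ℂ 4]
    simp
  let e : rootsOfUnity 4 ℂ ≃* Multiplicative (ZMod 4) := mulEquivOfCyclicCardEq hcard
  let ψ0 : H →+ ZMod 4 := AddMonoidHom.mk'
    (fun h => (e (φ' (Multiplicative.ofAdd h))).toAdd)
    (by intro a b; simp [ofAdd_add, map_mul])
  refine ⟨ψ0.comp (QuotientAddGroup.mk' C), fun c hc => ?_, ?_⟩
  · have : (QuotientAddGroup.mk' C) c = 0 := (QuotientAddGroup.eq_zero_iff c).mpr hc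
    simp only [AddMonoidHom.comp_apply, this]
    exact map_zero ψ0
  · simp only [AddMonoidHom.comp_apply]
    intro h0
    apply hφ
    have h1 : (e (φ' (Multiplicative.ofAdd ((x : Amb α β) : H)))).toAdd = 0 := h0
    have h2 : e (φ' (Multiplicative.ofAdd ((x : Amb α β) : H))) = 1 := by
      rwa [← toAdd_eq_zero]
    have h3 : φ' (Multiplicative.ofAdd ((x : Amb α β) : H)) = 1 := by
      exact e.injective (by rw [h2, map_one])
    have := congrArg (Subtype.val : rootsOfUnity 4 ℂ → ℂˣ) h3
    exact this

lemma zdual_zdual (C : AddSubgroup (Amb α β)) :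
    zdual (zdual (C : Set (Amb α β))) ⊆ (C : Set (Amb α β)) := by
  intro x hx
  by_contra hxC
  obtain ⟨ψ, hψC, hψx⟩ := sep C hxC
  obtain ⟨v, hv⟩ := exists_rep ψ
  have hvd : v ∈ zdual (C : Set (Amb α β)) := fun u hu => by
    rw [hv u]; exact hψC u hu
  have h0 := hx v hvd
  rw [zinner_comm v x, hv x] at h0
  exact hψx h0

end Stmt8Aux

/-- `Φ(C)` is linear iff `2u*v ∈ C⊥` for all `u ∈ C`, `v ∈ C⊥`. -/
theorem stmt8 {α β : ℕ} (C : AddSubgroup (Amb α β)) :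
    IsLinear (Phi '' (C : Set (Amb α β))) ↔
      ∀ u ∈ C, ∀ v ∈ zdual (C : Set (Amb α β)),
        star2 u v ∈ zdual (C : Set (Amb α β)) := by
  open Stmt8Aux in
  rw [Stmt8Aux.isLinear_iff]
  constructor
  · intro h u hu v hv w hw
    rw [zinner_comm w (star2 u v), zinner_star2_swap u v w]
    exact hv _ (h u hu w hw)
  · intro h u hu w hw
    apply Stmt8Aux.zdual_zdual C
    intro v hv
    rw [zinner_comm v (star2 u w), zinner_star2_swap u w v,
      zinner_comm (star2 u v) w]
    exact h u hu v hv w hw
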